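/- arXiv:0910.2685 — 3 statements merged into one kernel-verified Lean document; each statement's English description precedes it below -/
import Mathlib

section
/- Let G be a finite group and S, T disjoint subsets of G \ {e} with S ∪ T = G \ {e}. Then for every g ∈ G, the number of ordered pairs (g₁,g₂) ∈ S × T with g₁·g₂ = g equals the number of ordered pairs (g₁,g₂) ∈ T × S with g₁·g₂ = g. -/
/-- Number of ordered pairs `(g₁, g₂) ∈ A × B` with `g₁ * g₂ = g`. -/
def pairCount {G : Type*} [Group G] [DecidableEq G] (A B : Finset G) (g : G) : ℕ :=
  ((A ×ˢ B).filter (fun p => p.1 * p.2 = g)).card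

/-!
Adding `pairCount S S g` to both sides, the claim becomes
`pairCount S (S ∪ T) g = pairCount (S ∪ T) S g`, i.e. a count of pairs with one factor in `S`
and the other in `G \ {1}`. Either factor determines the other, and the other is `≠ 1` exactly
when the given factor is `≠ g`, so both sides equal `#(S.erase g)`.
-/

open Finset

section
variable {G : Type*} [Group G] [DecidableEq G]

lemma pairCount_eq_card_filter_fst (A B : Finset G) (g : G) :
    pairCount A B g = #{a ∈ A | a⁻¹ * g ∈ B} := by
  refine card_bij' (fun p _ => p.1) (fun a _ => (a, a⁻¹ * g)) ?_ ?_ ?_ ?_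
  · rintro ⟨a, b⟩ hab
    obtain ⟨⟨ha, hb⟩, rfl⟩ := by simpa only [pairCount, mem_filter, mem_product] using hab
    simpa [ha] using hb
  all_goals simp +contextual [← eq_inv_mul_iff_mul_eq]

lemma pairCount_eq_card_filter_snd (A B : Finset G) (g : G) :
    pairCount A B g = #{b ∈ B | g * b⁻¹ ∈ A} := by
  refine card_bij' (fun p _ => p.2) (fun b _ => (g * b⁻¹, b)) ?_ ?_ ?_ ?_
  · rintro ⟨a, b⟩ hab
    obtain ⟨⟨ha, hb⟩, rfl⟩ := by simpa only [pairCount, mem_filter, mem_product] using hab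
    simpa [hb] using ha
  all_goals simp +contextual [← eq_mul_inv_iff_mul_eq]

lemma pairCount_union_left (A B C : Finset G) (g : G) (h : Disjoint A B) :
    pairCount (A ∪ B) C g = pairCount A C g + pairCount B C g := by
  simp only [pairCount_eq_card_filter_fst, filter_union]
  exact card_union_of_disjoint (disjoint_filter_filter h)

lemma pairCount_union_right (A B C : Finset G) (g : G) (h : Disjoint B C) :
    pairCount A (B ∪ C) g = pairCount A B g + pairCount A C g := by
  simp only [pairCount_eq_card_filter_snd, filter_union]
  exact card_union_of_disjoint (disjoint_filter_filter h)

variable [Fintype G]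

lemma pairCount_univ_sdiff_one_right (A : Finset G) (g : G) :
    pairCount A (univ \ {1}) g = #(A.erase g) := by
  rw [pairCount_eq_card_filter_fst, ← filter_ne' A g]
  congr 1
  ext a
  simp [inv_mul_eq_one, eq_comm]

lemma pairCount_univ_sdiff_one_left (B : Finset G) (g : G) :
    pairCount (univ \ {1}) B g = #(B.erase g) := by
  rw [pairCount_eq_card_filter_snd, ← filter_ne' B g]
  congr 1
  ext b
  simp [mul_inv_eq_one, eq_comm]

end

theorem stmt0_general {G : Type*} [Group G] [Fintype G] [DecidableEq G]
    (S T : Finset G) (hd : Disjoint S T)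
    (hU : S ∪ T = Finset.univ \ {1}) :
    ∀ g : G, pairCount S T g = pairCount T S g := by
  intro g
  have hST : pairCount S S g + pairCount S T g = #(S.erase g) := by
    rw [← pairCount_union_right S S T g hd, hU, pairCount_univ_sdiff_one_right]
  have hTS : pairCount S S g + pairCount T S g = #(S.erase g) := by
    rw [← pairCount_union_left S T S g hd, hU, pairCount_univ_sdiff_one_left]
  omega

theorem stmt0 {G : Type*} [Group G] [Fintype G] [DecidableEq G]
    (S T : Finset G) (hd : Disjoint S T)
    (hS : (1 : G) ∉ S) (hT : (1 : G) ∉ T)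
    (hU : S ∪ T = Finset.univ \ {1}) :
    ∀ g : G, pairCount S T g = pairCount T S g :=
  stmt0_general S T hd hU
end

section
/- Let G = C_N × C_N = ⟨a,b : a^N = b^N = e, ab = ba⟩ and S = {a, a², …, a^{N-1}, b, b², …, b^{N-1}}, T = (S ∪ {e})^c. Then for every g ∈ S, N_{(S,S)}^g = N - 2, and for every h ∈ T, N_{(S,S)}^h = 2. -/
/-- Number of ordered pairs `(g₁, g₂) ∈ A × B` with `g₁ + g₂ = g` (additive group). -/
def pairCountAdd {G : Type*} [AddGroup G] [DecidableEq G] (A B : Finset G) (g : G) : ℕ :=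
  ((A ×ˢ B).filter (fun p => p.1 + p.2 = g)).card

section aux

variable (N : ℕ) [NeZero N]

private def Sdef : Finset (ZMod N × ZMod N) :=
  Finset.univ.filter
    (fun p : ZMod N × ZMod N => (p.1 ≠ 0 ∧ p.2 = 0) ∨ (p.1 = 0 ∧ p.2 ≠ 0))

private lemma count_axis1 (x : ZMod N) (hx : x ≠ 0) :
    pairCountAdd (Sdef N) (Sdef N) (x, 0) = N - 2 := by
  unfold pairCountAdd
  have hset : ((Sdef N ×ˢ Sdef N).filter (fun p => p.1 + p.2 = (x, 0)))
      = (Finset.univ.filter (fun u : ZMod N => u ≠ 0 ∧ u ≠ x)).image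
        (fun u => ((u, 0), (x - u, 0))) := by
    ext ⟨⟨a1, a2⟩, ⟨b1, b2⟩⟩
    simp only [Sdef, Finset.mem_filter, Finset.mem_product, Finset.mem_image,
      Finset.mem_univ, true_and, Prod.mk_add_mk, Prod.mk.injEq]
    constructor
    · rintro ⟨⟨⟨h1, rfl⟩ | ⟨rfl, h1⟩, ⟨h2, rfl⟩ | ⟨rfl, h2⟩⟩, e1, e2⟩
      · refine ⟨a1, ⟨h1, fun h => h2 ?_⟩, ⟨rfl, rfl⟩, ⟨?_, rfl⟩⟩
        · rw [h] at e1; linear_combination e1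
        · linear_combination -e1
      · exact absurd (by simpa using e2) h2
      · exact absurd (by simpa using e2) h1
      · exact absurd (by simpa using e1.symm) hx
    · rintro ⟨u, ⟨hu0, hux⟩, ⟨rfl, rfl⟩, ⟨rfl, rfl⟩⟩
      exact ⟨⟨Or.inl ⟨hu0, rfl⟩, Or.inl ⟨sub_ne_zero.mpr (Ne.symm hux), rfl⟩⟩, by ring, by ring⟩
  rw [hset, Finset.card_image_of_injective _ (fun u v h => by
    simpa using ((Prod.mk.injEq _ _ _ _).mp ((Prod.mk.injEq _ _ _ _).mp h).1).1)]
  have : (Finset.univ.filter (fun u : ZMod N => u ≠ 0 ∧ u ≠ x))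
      = Finset.univ \ {0, x} := by
    ext u; simp [and_comm]
  rw [this, Finset.card_sdiff_of_subset (by simp), Finset.card_pair hx.symm]
  simp [ZMod.card]

private lemma count_axis2 (y : ZMod N) (hy : y ≠ 0) :
    pairCountAdd (Sdef N) (Sdef N) (0, y) = N - 2 := by
  unfold pairCountAdd
  have hset : ((Sdef N ×ˢ Sdef N).filter (fun p => p.1 + p.2 = (0, y)))
      = (Finset.univ.filter (fun u : ZMod N => u ≠ 0 ∧ u ≠ y)).image
        (fun u => ((0, u), (0, y - u))) := by
    ext ⟨⟨a1, a2⟩, ⟨b1, b2⟩⟩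
    simp only [Sdef, Finset.mem_filter, Finset.mem_product, Finset.mem_image,
      Finset.mem_univ, true_and, Prod.mk_add_mk, Prod.mk.injEq]
    constructor
    · rintro ⟨⟨⟨h1, rfl⟩ | ⟨rfl, h1⟩, ⟨h2, rfl⟩ | ⟨rfl, h2⟩⟩, e1, e2⟩
      · exact absurd (by simpa using e2.symm) hy
      · exact absurd (by simpa using e1) h1
      · exact absurd (by simpa using e1) h2
      · refine ⟨a2, ⟨h1, fun h => h2 ?_⟩, ⟨rfl, rfl⟩, ⟨rfl, ?_⟩⟩
        · rw [h] at e2; linear_combination e2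
        · linear_combination -e2
    · rintro ⟨u, ⟨hu0, huy⟩, ⟨rfl, rfl⟩, ⟨rfl, rfl⟩⟩
      exact ⟨⟨Or.inr ⟨rfl, hu0⟩, Or.inr ⟨rfl, sub_ne_zero.mpr (Ne.symm huy)⟩⟩, by ring, by ring⟩
  rw [hset, Finset.card_image_of_injective _ (fun u v h => by
    simpa using ((Prod.mk.injEq _ _ _ _).mp ((Prod.mk.injEq _ _ _ _).mp h).1).2)]
  have : (Finset.univ.filter (fun u : ZMod N => u ≠ 0 ∧ u ≠ y))
      = Finset.univ \ {0, y} := by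
    ext u; simp [and_comm]
  rw [this, Finset.card_sdiff_of_subset (by simp), Finset.card_pair hy.symm]
  simp [ZMod.card]

private lemma count_both (x y : ZMod N) (hx : x ≠ 0) (hy : y ≠ 0) :
    pairCountAdd (Sdef N) (Sdef N) (x, y) = 2 := by
  unfold pairCountAdd
  have hset : ((Sdef N ×ˢ Sdef N).filter (fun p => p.1 + p.2 = (x, y)))
      = {((x, 0), (0, y)), ((0, y), (x, 0))} := by
    ext ⟨⟨a1, a2⟩, ⟨b1, b2⟩⟩
    simp only [Sdef, Finset.mem_filter, Finset.mem_product, Finset.mem_insert,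
      Finset.mem_singleton, Finset.mem_univ, true_and, Prod.mk_add_mk, Prod.mk.injEq]
    constructor
    · rintro ⟨⟨⟨h1, rfl⟩ | ⟨rfl, h1⟩, ⟨h2, rfl⟩ | ⟨rfl, h2⟩⟩, e1, e2⟩
      · exact absurd (by simpa using e2.symm) hy
      · exact Or.inl ⟨⟨by simpa using e1, rfl⟩, rfl, by simpa using e2⟩
      · exact Or.inr ⟨⟨rfl, by simpa using e2⟩, by simpa using e1, rfl⟩
      · exact absurd (by simpa using e1.symm) hx
    · rintro (⟨⟨rfl, rfl⟩, rfl, rfl⟩ | ⟨⟨rfl, rfl⟩, rfl, rfl⟩)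
      · exact ⟨⟨Or.inl ⟨hx, rfl⟩, Or.inr ⟨rfl, hy⟩⟩, by ring, by ring⟩
      · exact ⟨⟨Or.inr ⟨rfl, hy⟩, Or.inl ⟨hx, rfl⟩⟩, by ring, by ring⟩
  rw [hset, Finset.card_insert_of_notMem (by simp [hx, hy, Prod.ext_iff]),
    Finset.card_singleton]

end aux

theorem stmt5 (N : ℕ) [NeZero N] (hN : 2 ≤ N)
    (S T : Finset (ZMod N × ZMod N))
    (hS : S = Finset.univ.filter
      (fun p : ZMod N × ZMod N => (p.1 ≠ 0 ∧ p.2 = 0) ∨ (p.1 = 0 ∧ p.2 ≠ 0)))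
    (hT : T = Finset.univ \ (S ∪ {0})) :
    (∀ g ∈ S, pairCountAdd S S g = N - 2) ∧ (∀ h ∈ T, pairCountAdd S S h = 2) := by
  have hS' : S = Sdef N := hS
  subst hT
  constructor
  · intro g hg
    rw [hS] at hg
    simp only [Finset.mem_filter, Finset.mem_univ, true_and] at hg
    rw [hS']
    rcases hg with ⟨hx, hy⟩ | ⟨hx, hy⟩
    · have := count_axis1 N g.1 hx
      rwa [show ((g.1 : ZMod N), (0 : ZMod N)) = g by rw [← hy]] at this
    · have := count_axis2 N g.2 hy
      rwa [show ((0 : ZMod N), (g.2 : ZMod N)) = g by rw [← hx]] at this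
  · intro h hh
    rw [hS] at hh
    simp only [Finset.mem_sdiff, Finset.mem_union, Finset.mem_singleton, Finset.mem_filter,
      Finset.mem_univ, true_and, not_or] at hh
    obtain ⟨hns, hn0⟩ := hh
    push_neg at hns
    have hx : h.1 ≠ 0 := fun h1 => hn0 (Prod.ext h1 (hns.2 h1))
    have hy : h.2 ≠ 0 := hns.1 hx
    rw [hS']
    exact count_both N h.1 h.2 hx hy
end

section
/- Let D be a reversible (n,k,λ)-difference set in a finite abelian group G with 0 ∉ D, and let T = D^c \ {0}. Then for every g ∈ D and every h ∈ T, N_{(D,T)}^g + 1 = N_{(D,T)}^h. -/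
/-- `D` is an `(n, k, l)`-difference set in the additive group `G` of order `n`. -/
def IsDifferenceSet {G : Type*} [AddCommGroup G] [Fintype G] [DecidableEq G]
    (D : Finset G) (n k l : ℕ) : Prop :=
  Fintype.card G = n ∧ D.card = k ∧
    ∀ g : G, g ≠ 0 → ((D ×ˢ D).filter (fun p => p.1 - p.2 = g)).card = l

lemma pc_union {G : Type*} [AddGroup G] [DecidableEq G] (A B C : Finset G)
    (hBC : Disjoint B C) (g : G) :
    pairCountAdd A (B ∪ C) g = pairCountAdd A B g + pairCountAdd A C g := by
  unfold pairCountAdd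
  have h1 : A ×ˢ (B ∪ C) = A ×ˢ B ∪ A ×ˢ C := by
    ext p
    simp only [Finset.mem_product, Finset.mem_union]
    tauto
  have h2 : Disjoint (A ×ˢ B) (A ×ˢ C) := by
    rw [Finset.disjoint_left]
    intro p hp hp'
    simp [Finset.mem_product] at hp hp'
    exact (Finset.disjoint_left.mp hBC hp.2) hp'.2
  rw [h1, Finset.filter_union, Finset.card_union_of_disjoint]
  exact Finset.disjoint_filter_filter h2

lemma pc_univ {G : Type*} [AddGroup G] [Fintype G] [DecidableEq G] (A : Finset G) (g : G) :
    pairCountAdd A Finset.univ g = A.card := by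
  unfold pairCountAdd
  apply Finset.card_bij' (fun p _ => p.1) (fun d _ => (d, -d + g))
  · intro p hp
    simp only [Finset.mem_filter, Finset.mem_product] at hp
    exact hp.1.1
  · intro d hd
    simp only [Finset.mem_filter, Finset.mem_product, Finset.mem_univ, and_true]
    exact ⟨hd, by rw [add_neg_cancel_left]⟩
  · intro p hp
    simp only [Finset.mem_filter, Finset.mem_product] at hp
    have h2 : -p.1 + g = p.2 := by rw [← hp.2, neg_add_cancel_left]
    rw [h2]
  · intro d hd; rfl

lemma pc_zero {G : Type*} [AddGroup G] [DecidableEq G] (A : Finset G) (g : G) :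
    pairCountAdd A {0} g = if g ∈ A then 1 else 0 := by
  unfold pairCountAdd
  have h : (A ×ˢ ({0} : Finset G)).filter (fun p => p.1 + p.2 = g)
      = (A.filter (fun x => x = g)) ×ˢ {0} := by
    ext p
    simp only [Finset.mem_filter, Finset.mem_product, Finset.mem_singleton]
    constructor
    · rintro ⟨⟨h1, h2⟩, h3⟩
      rw [h2, add_zero] at h3
      exact ⟨⟨h1, h3⟩, h2⟩
    · rintro ⟨⟨h1, h2⟩, h3⟩
      exact ⟨⟨h1, h3⟩, by rw [h3, add_zero, h2]⟩
  rw [h, Finset.card_product, Finset.card_singleton, mul_one, Finset.filter_eq']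
  split_ifs <;> simp

lemma pc_DD {G : Type*} [AddCommGroup G] [Fintype G] [DecidableEq G]
    (D : Finset G) (l : ℕ) (hrev : ∀ d ∈ D, -d ∈ D)
    (hl : ∀ g : G, g ≠ 0 → ((D ×ˢ D).filter (fun p => p.1 - p.2 = g)).card = l)
    (g : G) (hg : g ≠ 0) : pairCountAdd D D g = l := by
  unfold pairCountAdd
  rw [← hl g hg]
  refine Finset.card_bij' (fun p _ => (p.1, -p.2)) (fun p _ => (p.1, -p.2)) ?_ ?_ ?_ ?_
  · intro p hp
    simp only [Finset.mem_filter, Finset.mem_product] at hp ⊢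
    refine ⟨⟨hp.1.1, hrev _ hp.1.2⟩, ?_⟩
    rw [sub_neg_eq_add]
    exact hp.2
  · intro p hp
    simp only [Finset.mem_filter, Finset.mem_product] at hp ⊢
    refine ⟨⟨hp.1.1, hrev _ hp.1.2⟩, ?_⟩
    rw [← sub_eq_add_neg]
    exact hp.2
  · intro p hp
    simp
  · intro p hp
    simp

theorem stmt9 {G : Type*} [AddCommGroup G] [Fintype G] [DecidableEq G]
    (D : Finset G) (n k l : ℕ) (hD : IsDifferenceSet D n k l)
    (hrev : ∀ d ∈ D, -d ∈ D) (h0 : (0 : G) ∉ D)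
    (T : Finset G) (hT : T = Dᶜ \ {0}) :
    ∀ g ∈ D, ∀ h ∈ T, pairCountAdd D T g + 1 = pairCountAdd D T h := by
  obtain ⟨hn, hk, hl⟩ := hD
  subst hT
  intro g hg h hh
  have hsplit : (Finset.univ : Finset G) = (D ∪ {0}) ∪ (Dᶜ \ {0}) := by
    ext x
    simp only [Finset.mem_univ, Finset.mem_union, Finset.mem_sdiff, Finset.mem_compl,
      Finset.mem_singleton, true_iff]
    tauto
  have hdisj1 : Disjoint (D ∪ {0} : Finset G) (Dᶜ \ {0}) := by
    rw [Finset.disjoint_left]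
    intro x hx hx'
    simp only [Finset.mem_union, Finset.mem_singleton] at hx
    simp only [Finset.mem_sdiff, Finset.mem_compl, Finset.mem_singleton] at hx'
    rcases hx with hx | hx
    · exact hx'.1 hx
    · exact hx'.2 hx
  have hdisj2 : Disjoint D ({0} : Finset G) := by
    rw [Finset.disjoint_left]
    intro x hx hx'
    simp only [Finset.mem_singleton] at hx'
    subst hx'
    exact h0 hx
  have key : ∀ x : G, x ≠ 0 →
      pairCountAdd D D x + pairCountAdd D {0} x + pairCountAdd D (Dᶜ \ {0}) x = k := by
    intro x hx
    rw [← hk, ← pc_univ D x, hsplit, pc_union _ _ _ hdisj1, pc_union _ _ _ hdisj2]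
  have hgne : g ≠ 0 := fun e => h0 (e ▸ hg)
  simp only [Finset.mem_sdiff, Finset.mem_compl, Finset.mem_singleton] at hh
  have k1 := key g hgne
  have k2 := key h hh.2
  rw [pc_DD D l hrev hl g hgne, pc_zero, if_pos hg] at k1
  rw [pc_DD D l hrev hl h hh.2, pc_zero, if_neg hh.1] at k2
  omega
end
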